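/- (M-step optimality, HMM case.) Let m ≥ 1, T ≥ 1, observations z_1,…,z_T ∈ ℝ, weights s(i,n) ≥ 0 for i ∈ {1,…,m}, n ∈ {1,…,T} with ∑_{i=1}^m s(i,n) = 1 for every n and S_i := ∑_{n=1}^T s(i,n) > 0 for every i, and counts c_{ij} ≥ 0 with c_i := ∑_{j=1}^m c_{ij} > 0 for every i. Define F(a, θ, σ²) := ∑_{i,j=1}^m c_{ij} log a_{ij} + ∑_{n=1}^T ∑_{i=1}^m s(i,n) · ( −(1/2) log(2πσ²) − (z_n − θ_i)²/(2σ²) ), and set â_{ij} := c_{ij}/c_i, θ̂_i := (∑_{n=1}^T s(i,n) z_n)/S_i, and σ̂² := (1/T) ∑_{n=1}^T ∑_{i=1}^m s(i,n)(z_n − θ̂_i)². If σ̂² > 0, then for every row-stochastic m×m matrix a with strictly positive entries, every θ ∈ ℝ^m and every σ² > 0, F(a, θ, σ²) ≤ F(â, θ̂, σ̂²). -/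

import Mathlib

/-! Each block of `F` is maximized separately. The transition block is Gibbs' inequality
row by row, from `log x ≤ x - 1`. In the Gaussian block, because `∑ᵢ s(i,n) = 1`, the
means `θ` enter only through the weighted squared error, which `θ̂` minimizes as a weighted
least-squares fit. For fixed error `T v̂`, the function `v ↦ -(T/2) log(2πv) - T v̂/(2v)` is
maximal at `v = v̂`, again by `log x ≤ x - 1`. -/

open scoped BigOperators Real

/-- The M-step transition matrix update `â_{ij} = c_{ij} / c_i`. -/
noncomputable def aHat {m : ℕ} (c : Fin m → Fin m → ℝ) : Fin m → Fin m → ℝ :=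
  fun i j => c i j / ∑ j', c i j'

/-- The M-step mean update `θ̂_i = (∑_n s(i,n) z_n) / ∑_n s(i,n)`. -/
noncomputable def thetaHat {m T : ℕ} (z : Fin T → ℝ) (s : Fin m → Fin T → ℝ) :
    Fin m → ℝ :=
  fun i => (∑ n, s i n * z n) / ∑ n, s i n

/-- The M-step variance update `σ̂² = (1/T) ∑_n ∑_i s(i,n) (z_n - θ̂_i)²`. -/
noncomputable def sigmaHat2 {m T : ℕ} (z : Fin T → ℝ) (s : Fin m → Fin T → ℝ) : ℝ :=
  (1 / (T : ℝ)) * ∑ n, ∑ i, s i n * (z n - thetaHat z s i) ^ 2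

/-- The EM/SAEM intermediate quantity for the hidden Markov model:
`F(a,θ,σ²) = ∑_{ij} c_{ij} log a_{ij} + ∑_n ∑_i s(i,n)(-(1/2) log(2πσ²) - (z_n - θ_i)²/(2σ²))`. -/
noncomputable def Fq {m T : ℕ} (z : Fin T → ℝ) (s : Fin m → Fin T → ℝ)
    (c : Fin m → Fin m → ℝ) (a : Fin m → Fin m → ℝ) (θ : Fin m → ℝ) (σ2 : ℝ) : ℝ :=
  (∑ i, ∑ j, c i j * Real.log (a i j)) +
    ∑ n, ∑ i, s i n * (-(1 / 2) * Real.log (2 * π * σ2) - (z n - θ i) ^ 2 / (2 * σ2))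

open Finset Real

section

variable {ι : Type*} [Fintype ι]

lemma mul_log_sub_mul_log_div_le {w p W : ℝ} (hw : 0 ≤ w) (hp : 0 < p) (hW : 0 < W) :
    w * log p - w * log (w / W) ≤ p * W - w := by
  rcases hw.eq_or_lt with rfl | hw
  · simpa using (mul_pos hp hW).le
  have hlog := log_le_sub_one_of_pos (div_pos (mul_pos hp hW) hw)
  rw [log_div (mul_pos hp hW).ne' hw.ne', log_mul hp.ne' hW.ne'] at hlog
  rw [log_div hw.ne' hW.ne']
  have h := mul_le_mul_of_nonneg_left hlog hw.le
  have hcancel : w * (p * W / w - 1) = p * W - w := by field_simp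
  linarith

lemma sum_mul_log_le_sum_mul_log_div_sum {w p : ι → ℝ} (hw : ∀ j, 0 ≤ w j)
    (hW : 0 < ∑ j, w j) (hp : ∀ j, 0 < p j) (hp_sum : ∑ j, p j ≤ 1) :
    ∑ j, w j * log (p j) ≤ ∑ j, w j * log (w j / ∑ j', w j') := by
  have h := sum_le_sum fun j (_ : j ∈ univ) => mul_log_sub_mul_log_div_le (hw j) (hp j) hW
  rw [sum_sub_distrib, sum_sub_distrib, ← sum_mul] at h
  nlinarith

lemma sum_mul_sq_sub_eq_add {w z : ι → ℝ} (hW : ∑ n, w n ≠ 0) (t : ℝ) :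
    ∑ n, w n * (z n - t) ^ 2 = ∑ n, w n * (z n - (∑ n, w n * z n) / ∑ n, w n) ^ 2
      + (∑ n, w n) * (t - (∑ n, w n * z n) / ∑ n, w n) ^ 2 := by
  have expand : ∀ u : ℝ, ∑ n, w n * (z n - u) ^ 2
      = ∑ n, w n * z n ^ 2 - 2 * u * ∑ n, w n * z n + u ^ 2 * ∑ n, w n := by
    intro u
    simp only [mul_sum, ← sum_sub_distrib, ← sum_add_distrib]
    exact sum_congr rfl fun n _ => by ring
  rw [expand, expand]
  field_simp
  ring

lemma sum_mul_sq_sub_weightedMean_le {w z : ι → ℝ} (hW : 0 < ∑ n, w n) (t : ℝ) :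
    ∑ n, w n * (z n - (∑ n, w n * z n) / ∑ n, w n) ^ 2 ≤ ∑ n, w n * (z n - t) ^ 2 := by
  rw [sum_mul_sq_sub_eq_add hW.ne' t]
  have := mul_nonneg hW.le (sq_nonneg (t - (∑ n, w n * z n) / ∑ n, w n))
  linarith

end

lemma log_add_one_le_log_add_div {v₀ v : ℝ} (hv₀ : 0 < v₀) (hv : 0 < v) :
    log v₀ + 1 ≤ log v + v₀ / v := by
  have h := log_le_sub_one_of_pos (div_pos hv₀ hv)
  rw [log_div hv₀.ne' hv.ne'] at h
  linarith

lemma mul_neg_half_log_sub_div_le {N v₀ v R : ℝ} (hN : 0 ≤ N) (hv₀ : 0 < v₀) (hv : 0 < v)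
    (hR : N * v₀ ≤ R) :
    N * (-(1 / 2) * log (2 * π * v)) - R / (2 * v)
      ≤ N * (-(1 / 2) * log (2 * π * v₀)) - N * v₀ / (2 * v₀) := by
  have hπ : 2 * π ≠ 0 := by positivity
  have hRv : N / 2 * (v₀ / v) ≤ R / (2 * v) := by
    rw [show N / 2 * (v₀ / v) = N * v₀ / (2 * v) by ring]
    gcongr
  have hlog := mul_le_mul_of_nonneg_left (log_add_one_le_log_add_div hv₀ hv) hN
  have hN₀ : N * v₀ / (2 * v₀) = N / 2 := by field_simp
  rw [log_mul hπ hv.ne', log_mul hπ hv₀.ne', hN₀]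
  linarith

noncomputable def weightedSqErr {m T : ℕ} (z : Fin T → ℝ) (s : Fin m → Fin T → ℝ)
    (θ : Fin m → ℝ) : ℝ :=
  ∑ n, ∑ i, s i n * (z n - θ i) ^ 2

lemma weightedSqErr_thetaHat_le {m T : ℕ} (z : Fin T → ℝ) {s : Fin m → Fin T → ℝ}
    (hS : ∀ i, 0 < ∑ n, s i n) (θ : Fin m → ℝ) :
    weightedSqErr z s (thetaHat z s) ≤ weightedSqErr z s θ := by
  unfold weightedSqErr
  rw [sum_comm, sum_comm (f := fun n i => s i n * (z n - θ i) ^ 2)]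
  exact sum_le_sum fun i _ => sum_mul_sq_sub_weightedMean_le (hS i) (θ i)

lemma Fq_eq {m T : ℕ} (z : Fin T → ℝ) {s : Fin m → Fin T → ℝ} (hsum : ∀ n, ∑ i, s i n = 1)
    (c a : Fin m → Fin m → ℝ) (θ : Fin m → ℝ) (v : ℝ) :
    Fq z s c a θ v = ∑ i, ∑ j, c i j * log (a i j)
      + (T * (-(1 / 2) * log (2 * π * v)) - weightedSqErr z s θ / (2 * v)) := by
  have row : ∀ n, ∑ i, s i n * (-(1 / 2) * log (2 * π * v) - (z n - θ i) ^ 2 / (2 * v))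
      = -(1 / 2) * log (2 * π * v) - (∑ i, s i n * (z n - θ i) ^ 2) / (2 * v) := by
    intro n
    simp only [mul_sub, sum_sub_distrib, ← sum_mul, hsum, one_mul, sum_div, mul_div_assoc]
  simp only [Fq, weightedSqErr, row, sum_sub_distrib, sum_const, card_univ, Fintype.card_fin,
    nsmul_eq_mul, sum_div]

theorem mstep_optimality_hmm_general (m T : ℕ)
    (z : Fin T → ℝ) (s : Fin m → Fin T → ℝ)
    (hsum : ∀ n, ∑ i, s i n = 1)
    (hSpos : ∀ i, 0 < ∑ n, s i n)
    (c : Fin m → Fin m → ℝ) (hc : ∀ i j, 0 ≤ c i j) (hcpos : ∀ i, 0 < ∑ j, c i j)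
    (hσ : 0 < sigmaHat2 z s) :
    ∀ (a : Fin m → Fin m → ℝ) (θ : Fin m → ℝ) (σ2 : ℝ),
      (∀ i j, 0 < a i j) → (∀ i, ∑ j, a i j = 1) → 0 < σ2 →
      Fq z s c a θ σ2 ≤ Fq z s c (aHat c) (thetaHat z s) (sigmaHat2 z s) := by
  intro a θ σ2 ha hrow hσ2
  -- `1 / 0 = 0`, so `σ̂² > 0` already forces `T ≠ 0`.
  have hT : (T : ℝ) ≠ 0 := fun h => by simp [sigmaHat2, h] at hσ
  have hSqErr : weightedSqErr z s (thetaHat z s) = T * sigmaHat2 z s := by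
    rw [sigmaHat2, weightedSqErr]
    field_simp
  rw [Fq_eq z hsum, Fq_eq z hsum, hSqErr]
  refine add_le_add (sum_le_sum fun i _ => ?_) ?_
  · exact sum_mul_log_le_sum_mul_log_div_sum (hc i) (hcpos i) (ha i) (hrow i).le
  · refine mul_neg_half_log_sub_div_le T.cast_nonneg hσ hσ2 ?_
    exact hSqErr ▸ weightedSqErr_thetaHat_le z hSpos θ

/-- M-step optimality in the HMM case: the updates `â`, `θ̂`, `σ̂²` maximize the EM
intermediate quantity `F` over strictly positive row-stochastic matrices `a`, means `θ`
and variances `σ² > 0`. -/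
theorem mstep_optimality_hmm (m T : ℕ) (hm : 1 ≤ m) (hT : 1 ≤ T)
    (z : Fin T → ℝ) (s : Fin m → Fin T → ℝ)
    (hs : ∀ i n, 0 ≤ s i n) (hsum : ∀ n, ∑ i, s i n = 1)
    (hSpos : ∀ i, 0 < ∑ n, s i n)
    (c : Fin m → Fin m → ℝ) (hc : ∀ i j, 0 ≤ c i j) (hcpos : ∀ i, 0 < ∑ j, c i j)
    (hσ : 0 < sigmaHat2 z s) :
    ∀ (a : Fin m → Fin m → ℝ) (θ : Fin m → ℝ) (σ2 : ℝ),
      (∀ i j, 0 < a i j) → (∀ i, ∑ j, a i j = 1) → 0 < σ2 →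
      Fq z s c a θ σ2 ≤ Fq z s c (aHat c) (thetaHat z s) (sigmaHat2 z s) :=
  mstep_optimality_hmm_general m T z s hsum hSpos c hc hcpos hσ
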